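/- arXiv:2405.01719 — 4 statements merged into one kernel-verified Lean document; each statement's English description precedes it below -/
import Mathlib

section
/- No ordinal benchmark (social welfare function from profiles of strict rankings of at least three alternatives by at least three voters to a strict aggregate ranking) can simultaneously satisfy Non-Dictatorship, Pareto Efficiency, Independence of Irrelevant Alternatives, and Universality (unrestricted domain). -/
/-!
Sen's decisive-coalition proof. A coalition `G` is decisive over `(x, y)` if `f` puts `x` before
`y` whenever every member of `G` does. By IIA, a single profile in which `f` puts `x` before `y`
and exactly the members of `G` do shows that `G` is at least *almost* decisive over `(x, y)`
(members for, everybody else against). Inserting a third alternative `z` and appealing to Pareto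
turns this into decisiveness over `(x, z)` and `(z, y)`, hence over every pair (field expansion).
If `G₁ ∪ G₂` is decisive, the Condorcet cycle `x y z`, `y z x`, `z x y` on `G₁`, `G₂` and the rest
makes `G₁` almost decisive over `(x, z)` or `G₂` almost decisive over `(y, x)` (contraction).
Starting from the coalition of all voters, which is decisive by Pareto, and splitting off one voter
at a time, one arrives at a decisive single voter: a dictator.
-/

namespace Arrow

variable {V A : Type*}

theorem exists_three_ne (hA : 3 ≤ ENat.card A) : ∃ x y z : A, x ≠ y ∧ x ≠ z ∧ y ≠ z := by
  have : Nontrivial A := (ENat.one_lt_card_iff_nontrivial A).1 (lt_of_lt_of_le (by norm_num) hA)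
  obtain ⟨x, y, hxy⟩ := exists_pair_ne A
  obtain ⟨z, hzx, hzy⟩ := ENat.exists_ne_ne_of_three_le hA x y
  exact ⟨x, y, z, hxy, hzx.symm, hzy.symm⟩

/-- All profiles below are built by re-scoring voters' orders: alternatives of equal score stay
in the voter's own order, which is what lets IIA transfer conclusions to the given profile. -/
def scoreLex (s : A → ℕ) (r : A → A → Prop) (a b : A) : Prop :=
  s a < s b ∨ s a = s b ∧ r a b

section scoreLex

variable {s : A → ℕ} {r : A → A → Prop} {a b : A}

instance isStrictTotalOrder_scoreLex [IsStrictTotalOrder A r] (s : A → ℕ) :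
    IsStrictTotalOrder A (scoreLex s r) where
  trichotomous a b hab hba := by
    simp only [scoreLex, not_or, not_and] at hab hba
    obtain ⟨hab, hab'⟩ := hab
    obtain ⟨hba, hba'⟩ := hba
    exact Std.Trichotomous.trichotomous a b (hab' (by omega)) (hba' (by omega))
  irrefl a := by
    rintro (h | ⟨-, h⟩)
    exacts [lt_irrefl _ h, irrefl a h]
  trans a b c := by
    rintro (h₁ | ⟨h₁, h₁'⟩) (h₂ | ⟨h₂, h₂'⟩)
    · exact .inl (h₁.trans h₂)
    · exact .inl (h₂ ▸ h₁)
    · exact .inl (h₁ ▸ h₂)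
    · exact .inr ⟨h₁.trans h₂, _root_.trans h₁' h₂'⟩

theorem scoreLex_of_lt (h : s a < s b) : scoreLex s r a b := .inl h

theorem scoreLex_iff_of_eq (h : s a = s b) : scoreLex s r a b ↔ r a b := by
  simp [scoreLex, h]

end scoreLex

def IsProfile (R : V → A → A → Prop) : Prop :=
  ∀ i, IsStrictTotalOrder A (R i)

theorem IsProfile.scoreLex {R : V → A → A → Prop} (hR : IsProfile R) (s : V → A → ℕ) :
    IsProfile fun i => scoreLex (s i) (R i) :=
  fun i => have := hR i; inferInstance

structure IsArrovian (f : (V → A → A → Prop) → A → A → Prop) : Prop where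
  isStrictTotalOrder : ∀ R, IsProfile R → IsStrictTotalOrder A (f R)
  pareto : ∀ R, IsProfile R → ∀ x y, (∀ i, R i x y) → f R x y
  iia : ∀ R R', IsProfile R → IsProfile R' → ∀ x y, (∀ i, R i x y ↔ R' i x y) →
    (f R x y ↔ f R' x y)

variable {f : (V → A → A → Prop) → A → A → Prop} {G G₁ G₂ : Finset V} {x y z : A}

def DecisiveFor (f : (V → A → A → Prop) → A → A → Prop) (G : Finset V) (x y : A) : Prop :=
  ∀ R, IsProfile R → (∀ i ∈ G, R i x y) → f R x y

def AlmostDecisiveFor (f : (V → A → A → Prop) → A → A → Prop) (G : Finset V) (x y : A) : Prop :=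
  ∀ R, IsProfile R → (∀ i ∈ G, R i x y) → (∀ i ∉ G, R i y x) → f R x y

def Decisive (f : (V → A → A → Prop) → A → A → Prop) (G : Finset V) : Prop :=
  ∀ x y, x ≠ y → DecisiveFor f G x y

theorem DecisiveFor.almostDecisiveFor (h : DecisiveFor f G x y) : AlmostDecisiveFor f G x y :=
  fun R hR hG _ => h R hR hG

theorem almostDecisiveFor_of_forall_iff (hf : IsArrovian f) {P : V → A → A → Prop}
    (hP : IsProfile P) (hPf : f P x y) (hPG : ∀ i, P i x y ↔ i ∈ G) :
    AlmostDecisiveFor f G x y := by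
  intro R hR hG hGc
  refine (hf.iia R P hR hP x y fun i => ?_).2 hPf
  rw [hPG]
  by_cases hi : i ∈ G
  · exact iff_of_true (hG i hi) hi
  · have := hR i
    exact iff_of_false (asymm (hGc i hi)) hi

theorem AlmostDecisiveFor.decisiveFor_right (hf : IsArrovian f) (h : AlmostDecisiveFor f G x y)
    (hxy : x ≠ y) (hxz : x ≠ z) (hyz : y ≠ z) : DecisiveFor f G x z := by
  classical
  intro R hR hG
  let s : V → A → ℕ := fun i a => if i ∈ G then [x, y].idxOf a else [y].idxOf a
  have hR' := hR.scoreLex s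
  have := hf.isStrictTotalOrder _ hR'
  have hfxy := h _ hR' (fun i hi => scoreLex_of_lt (by grind))
    (fun i hi => scoreLex_of_lt (by grind))
  have hfyz := hf.pareto _ hR' y z fun i => scoreLex_of_lt <| by grind
  refine (hf.iia R _ hR hR' x z fun i => ?_).2 (_root_.trans hfxy hfyz)
  by_cases hi : i ∈ G
  · exact iff_of_true (hG i hi) (scoreLex_of_lt (by grind))
  · exact (scoreLex_iff_of_eq (by grind)).symm

theorem AlmostDecisiveFor.decisiveFor_left (hf : IsArrovian f) (h : AlmostDecisiveFor f G x y)
    (hxy : x ≠ y) (hxz : x ≠ z) (hyz : y ≠ z) : DecisiveFor f G z y := by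
  classical
  intro R hR hG
  let s : V → A → ℕ := fun i a => if i ∈ G then [z, x].idxOf a else if a = x then 1 else 0
  have hR' := hR.scoreLex s
  have := hf.isStrictTotalOrder _ hR'
  have hfxy := h _ hR'
    (fun i hi => scoreLex_of_lt (by grind))
    (fun i hi => scoreLex_of_lt (by grind))
  have hfzx := hf.pareto _ hR' z x fun i => scoreLex_of_lt <| by grind
  refine (hf.iia R _ hR hR' z y fun i => ?_).2 (_root_.trans hfzx hfxy)
  by_cases hi : i ∈ G
  · exact iff_of_true (hG i hi) (scoreLex_of_lt (by grind))
  · exact (scoreLex_iff_of_eq (by grind)).symm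

theorem AlmostDecisiveFor.decisiveFor (hf : IsArrovian f) (hA : 3 ≤ ENat.card A)
    (h : AlmostDecisiveFor f G x y) (hxy : x ≠ y) : DecisiveFor f G x y := by
  obtain ⟨z, hzx, hzy⟩ := ENat.exists_ne_ne_of_three_le hA x y
  exact (h.decisiveFor_right hf hxy hzx.symm hzy.symm).almostDecisiveFor.decisiveFor_right hf
    hzx.symm hxy hzy

theorem AlmostDecisiveFor.decisive (hf : IsArrovian f) (hA : 3 ≤ ENat.card A)
    (h : AlmostDecisiveFor f G x y) (hxy : x ≠ y) : Decisive f G := by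
  have left {a b c : A} (h : AlmostDecisiveFor f G a b) (hab : a ≠ b) (hcb : c ≠ b) :
      AlmostDecisiveFor f G c b := by
    rcases eq_or_ne c a with rfl | hca
    · exact h
    · exact (h.decisiveFor_left hf hab hca.symm hcb.symm).almostDecisiveFor
  have right {a b c : A} (h : AlmostDecisiveFor f G a b) (hab : a ≠ b) (hca : c ≠ a) :
      AlmostDecisiveFor f G a c := by
    rcases eq_or_ne c b with rfl | hcb
    · exact h
    · exact (h.decisiveFor_right hf hab hca.symm hcb.symm).almostDecisiveFor
  intro a b hab
  refine AlmostDecisiveFor.decisiveFor hf hA ?_ hab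
  rcases eq_or_ne a y with rfl | hay
  · obtain ⟨c, hcx, hca⟩ := ENat.exists_ne_ne_of_three_le hA x a
    exact right (left (right h hxy hcx) hcx.symm hca.symm) hca.symm hab.symm
  · exact right (left h hxy hay) hay hab.symm

theorem Decisive.left_or_right_of_union [DecidableEq V] (hf : IsArrovian f) (hA : 3 ≤ ENat.card A)
    (hG : Disjoint G₁ G₂) (h : Decisive f (G₁ ∪ G₂)) : Decisive f G₁ ∨ Decisive f G₂ := by
  classical
  obtain ⟨x, y, z, hxy, hxz, hyz⟩ := exists_three_ne hA
  let s : V → A → ℕ := fun i a =>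
    if i ∈ G₁ then [x, y, z].idxOf a else if i ∈ G₂ then [y, z, x].idxOf a else [z, x, y].idxOf a
  let P : V → A → A → Prop := fun i => scoreLex (s i) WellOrderingRel
  have hP : IsProfile P := fun _ => inferInstance
  have := hf.isStrictTotalOrder P hP
  have hG₁₂ : ∀ i ∈ G₁, i ∉ G₂ := fun _ => (Finset.disjoint_left.1 hG ·)
  have hP_xz_yx : ∀ i, (P i x z ↔ i ∈ G₁) ∧ (P i y x ↔ i ∈ G₂) := fun i => by grind [scoreLex]
  have hfyz := h y z hyz P hP fun i hi => scoreLex_of_lt <| by grind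
  rcases trichotomous_of (f P) x z with hfxz | rfl | hfzx
  · exact .inl <| (almostDecisiveFor_of_forall_iff hf hP hfxz fun i => (hP_xz_yx i).1).decisive
      hf hA hxz
  · exact absurd rfl hxz
  · exact .inr <| (almostDecisiveFor_of_forall_iff hf hP (_root_.trans hfyz hfzx)
      fun i => (hP_xz_yx i).2).decisive hf hA hxy.symm

theorem not_decisive_empty [Nontrivial A] (hf : IsArrovian f) : ¬Decisive f (∅ : Finset V) := by
  intro h
  obtain ⟨x, y, hxy⟩ := exists_pair_ne A
  let P : V → A → A → Prop := fun _ => WellOrderingRel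
  have hP : IsProfile P := fun _ => inferInstance
  have := hf.isStrictTotalOrder P hP
  exact asymm (h x y hxy P hP (by simp)) (h y x hxy.symm P hP (by simp))

theorem Decisive.exists_singleton (hf : IsArrovian f) (hA : 3 ≤ ENat.card A)
    (h : Decisive f G) : ∃ i, Decisive f {i} := by
  classical
  obtain ⟨x, y, -, hxy, -⟩ := exists_three_ne hA
  have := nontrivial_of_ne x y hxy
  induction G using Finset.induction_on with
  | empty => exact absurd h (not_decisive_empty hf)
  | insert i G hi ih =>
    rw [Finset.insert_eq] at h
    exact (h.left_or_right_of_union hf hA (Finset.disjoint_singleton_left.2 hi)).elim (⟨i, ·⟩) ih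

end Arrow

open Arrow in
theorem arrow_impossibility_for_benchmarks_general
    {V A : Type} [Fintype V] [Fintype A]
    (hA : 3 ≤ Fintype.card A)
    (f : (V → A → A → Prop) → (A → A → Prop))
    (hout : ∀ R : V → A → A → Prop,
      (∀ i, IsStrictTotalOrder A (R i)) → IsStrictTotalOrder A (f R))
    (pareto : ∀ R : V → A → A → Prop, (∀ i, IsStrictTotalOrder A (R i)) →
      ∀ x y : A, (∀ i, R i x y) → f R x y)
    (iia : ∀ R R' : V → A → A → Prop,
      (∀ i, IsStrictTotalOrder A (R i)) → (∀ i, IsStrictTotalOrder A (R' i)) →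
      ∀ x y : A, (∀ i, R i x y ↔ R' i x y) → (f R x y ↔ f R' x y)) :
    ∃ i : V, ∀ R : V → A → A → Prop, (∀ i, IsStrictTotalOrder A (R i)) →
      ∀ x y : A, R i x y → f R x y := by
  have hf : IsArrovian f := ⟨hout, pareto, iia⟩
  have huniv : Decisive f (Finset.univ : Finset V) :=
    fun x y _ R hR hG => pareto R hR x y fun i => hG i (Finset.mem_univ i)
  obtain ⟨i, hi⟩ := huniv.exists_singleton hf (by simpa using hA)
  refine ⟨i, fun R hR x y hxy => ?_⟩
  have := hR i
  exact hi x y (ne_of_irrefl hxy) R hR (by simpa using hxy)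

/-- Arrow's Impossibility Theorem for ordinal benchmarks: any aggregation rule `f`
mapping profiles of strict total orders (one per voter/task) to a strict total order,
satisfying Pareto Efficiency and IIA on all profiles (Universality), with at least
three voters and three alternatives, must have a dictator (Non-Dictatorship fails). -/
theorem arrow_impossibility_for_benchmarks
    {V A : Type} [Fintype V] [Fintype A]
    (hV : 3 ≤ Fintype.card V) (hA : 3 ≤ Fintype.card A)
    (f : (V → A → A → Prop) → (A → A → Prop))
    (hout : ∀ R : V → A → A → Prop,
      (∀ i, IsStrictTotalOrder A (R i)) → IsStrictTotalOrder A (f R))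
    (pareto : ∀ R : V → A → A → Prop, (∀ i, IsStrictTotalOrder A (R i)) →
      ∀ x y : A, (∀ i, R i x y) → f R x y)
    (iia : ∀ R R' : V → A → A → Prop,
      (∀ i, IsStrictTotalOrder A (R i)) → (∀ i, IsStrictTotalOrder A (R' i)) →
      ∀ x y : A, (∀ i, R i x y ↔ R' i x y) → (f R x y ↔ f R' x y)) :
    ∃ i : V, ∀ R : V → A → A → Prop, (∀ i, IsStrictTotalOrder A (R i)) →
      ∀ x y : A, R i x y → f R x y :=
  arrow_impossibility_for_benchmarks_general hA f hout pareto iia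
end

section
/- Field Expansion Lemma: For a social welfare function on at least three alternatives satisfying Pareto Efficiency, IIA, and Universality, if a coalition G of voters is weakly decisive over some ordered pair (x,y) with x ≠ y, then G is decisive over every ordered pair of alternatives. -/
/-!
Raising a weakly decisive coalition to a decisive one is done one alternative at a time. Given
that `G` is weakly decisive over `(a, b)` and a third alternative `c`, take any profile in which
`G` prefers `a` to `c` and modify it so that `G` ranks `a ≻ b ≻ c` while everyone else puts `b`
on top, keeping each voter's comparison of `a` and `c`. Then `a ≻ b` socially by weak
decisiveness, `b ≻ c` by Pareto, so `a ≻ c` by transitivity, and by IIA this holds for the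
original profile. The symmetric construction (`G` ranks `c ≻ a ≻ b`, everyone else puts `a` at
the bottom) replaces the first alternative instead. With three alternatives these two moves
connect every ordered pair to `(a, b)`.
-/

open Function

variable {V A : Type}

def lexBy (s : A → ℕ) (r : A → A → Prop) : A → A → Prop :=
  Prod.Lex (· < ·) r on fun x => (s x, x)

theorem lexBy_iff {s : A → ℕ} {r : A → A → Prop} {x y : A} :
    lexBy s r x y ↔ s x < s y ∨ s x = s y ∧ r x y :=
  Prod.lex_def

theorem isStrictTotalOrder_lexBy (s : A → ℕ) (r : A → A → Prop) [IsStrictTotalOrder A r] :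
    IsStrictTotalOrder A (lexBy s r) :=
  have : IsStrictTotalOrder (ℕ × A) (Prod.Lex (· < ·) r) := {}
  Injective.isStrictTotalOrder_onFun (f := fun x => (s x, x)) _ fun _ _ h => congrArg Prod.snd h

def IsProfile (R : V → A → A → Prop) : Prop :=
  ∀ i, IsStrictTotalOrder A (R i)

theorem IsProfile.lexBy {R : V → A → A → Prop} (hR : IsProfile R) (s : V → A → ℕ) :
    IsProfile fun i => lexBy (s i) (R i) :=
  fun i => have := hR i; isStrictTotalOrder_lexBy _ _

structure IsArrovian (f : (V → A → A → Prop) → A → A → Prop) : Prop where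
  trans : ∀ R, IsProfile R → IsTrans A (f R)
  pareto : ∀ R, IsProfile R → ∀ a b, (∀ i, R i a b) → f R a b
  iia : ∀ R R', IsProfile R → IsProfile R' → ∀ a b, (∀ i, R i a b ↔ R' i a b) →
    (f R a b ↔ f R' a b)

def WeaklyDecisiveOver (f : (V → A → A → Prop) → A → A → Prop) (G : Set V) (a b : A) :
    Prop :=
  ∀ R, IsProfile R → (∀ i ∈ G, R i a b) → (∀ i ∉ G, R i b a) → f R a b

def DecisiveOver (f : (V → A → A → Prop) → A → A → Prop) (G : Set V) (a b : A) : Prop :=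
  ∀ R, IsProfile R → (∀ i ∈ G, R i a b) → f R a b

variable {f : (V → A → A → Prop) → A → A → Prop} {G : Set V} {a b c d : A}

theorem DecisiveOver.weaklyDecisiveOver (h : DecisiveOver f G a b) :
    WeaklyDecisiveOver f G a b :=
  fun R hR hG _ => h R hR hG

namespace WeaklyDecisiveOver

theorem decisiveOver_replace_snd (hf : IsArrovian f) (hW : WeaklyDecisiveOver f G a b)
    (hab : a ≠ b) (hca : c ≠ a) (hcb : c ≠ b) : DecisiveOver f G a c := by
  classical
  intro R hR hG
  -- inside `G` rank `a ≻ b ≻ rest`, outside `G` put `b` on top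
  let s : V → A → ℕ := fun i x =>
    if i ∈ G then (if x = a then 0 else if x = b then 1 else 2) else (if x = b then 0 else 1)
  have hR' := hR.lexBy s
  have hbc : f _ b c := hf.pareto _ hR' b c fun i => by
    by_cases hi : i ∈ G <;> simp [lexBy_iff, s, hi, hab.symm, hca, hcb]
  have hab' : f _ a b := hW _ hR' (fun i hi => by simp [lexBy_iff, s, hi, hab.symm])
    (fun i hi => by simp [lexBy_iff, s, hi, hab])
  refine (hf.iia R _ hR hR' a c fun i => ?_).2 ((hf.trans _ hR').trans _ _ _ hab' hbc)
  by_cases hi : i ∈ G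
  · simp [lexBy_iff, s, hi, hca, hcb, hG i hi]
  · simp [lexBy_iff, s, hi, hab, hcb]

theorem decisiveOver_replace_fst (hf : IsArrovian f) (hW : WeaklyDecisiveOver f G a b)
    (hab : a ≠ b) (hca : c ≠ a) (hcb : c ≠ b) : DecisiveOver f G c b := by
  classical
  intro R hR hG
  -- inside `G` rank `c ≻ a ≻ rest`, outside `G` put `a` at the bottom
  let s : V → A → ℕ := fun i x =>
    if i ∈ G then (if x = c then 0 else if x = a then 1 else 2) else (if x = a then 1 else 0)
  have hR' := hR.lexBy s
  have hca' : f _ c a := hf.pareto _ hR' c a fun i => by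
    by_cases hi : i ∈ G <;> simp [lexBy_iff, s, hi, hca, hca.symm]
  have hab' : f _ a b := hW _ hR'
    (fun i hi => by simp [lexBy_iff, s, hi, hca.symm, hcb.symm, hab.symm])
    (fun i hi => by simp [lexBy_iff, s, hi, hab.symm])
  refine (hf.iia R _ hR hR' c b fun i => ?_).2 ((hf.trans _ hR').trans _ _ _ hca' hab')
  by_cases hi : i ∈ G
  · simp [lexBy_iff, s, hi, hcb.symm, hab.symm, hG i hi]
  · simp [lexBy_iff, s, hi, hca, hab.symm]

theorem decisiveOver (hf : IsArrovian f) (hA : 3 ≤ ENat.card A)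
    (hW : WeaklyDecisiveOver f G a b) (hab : a ≠ b) : DecisiveOver f G a b := by
  obtain ⟨c, hca, hcb⟩ := ENat.exists_ne_ne_of_three_le hA a b
  exact (hW.decisiveOver_replace_snd hf hab hca hcb).weaklyDecisiveOver.decisiveOver_replace_snd
    hf hca.symm hab.symm hcb.symm

theorem decisiveOver_left (hf : IsArrovian f) (hA : 3 ≤ ENat.card A)
    (hW : WeaklyDecisiveOver f G a b) (hab : a ≠ b) (hca : c ≠ a) : DecisiveOver f G a c := by
  obtain rfl | hcb := eq_or_ne c b
  · exact hW.decisiveOver hf hA hab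
  · exact hW.decisiveOver_replace_snd hf hab hca hcb

theorem decisiveOver_right (hf : IsArrovian f) (hA : 3 ≤ ENat.card A)
    (hW : WeaklyDecisiveOver f G a b) (hab : a ≠ b) (hcb : c ≠ b) : DecisiveOver f G c b := by
  obtain rfl | hca := eq_or_ne c a
  · exact hW.decisiveOver hf hA hab
  · exact hW.decisiveOver_replace_fst hf hab hca hcb

theorem decisiveOver_of_ne (hf : IsArrovian f) (hA : 3 ≤ ENat.card A)
    (hW : WeaklyDecisiveOver f G a b) (hab : a ≠ b) (hcd : c ≠ d) : DecisiveOver f G c d := by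
  suffices ∃ e, c ≠ e ∧ DecisiveOver f G c e by
    obtain ⟨e, hce, hc⟩ := this
    exact hc.weaklyDecisiveOver.decisiveOver_left hf hA hce hcd.symm
  obtain rfl | hcb := eq_or_ne c b
  · obtain ⟨e, hea, heb⟩ := ENat.exists_ne_ne_of_three_le hA a c
    exact ⟨e, heb.symm, (hW.decisiveOver_left hf hA hab hea).weaklyDecisiveOver.decisiveOver_right
      hf hA hea.symm heb.symm⟩
  · exact ⟨b, hcb, hW.decisiveOver_right hf hA hab hcb⟩

end WeaklyDecisiveOver

theorem field_expansion_lemma_general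
    {V A : Type} [Fintype A] (hA : 3 ≤ Fintype.card A)
    (f : (V → A → A → Prop) → (A → A → Prop))
    (hout : ∀ R : V → A → A → Prop,
      (∀ i, IsStrictTotalOrder A (R i)) → IsStrictTotalOrder A (f R))
    (pareto : ∀ R : V → A → A → Prop, (∀ i, IsStrictTotalOrder A (R i)) →
      ∀ x y : A, (∀ i, R i x y) → f R x y)
    (iia : ∀ R R' : V → A → A → Prop,
      (∀ i, IsStrictTotalOrder A (R i)) → (∀ i, IsStrictTotalOrder A (R' i)) →
      ∀ x y : A, (∀ i, R i x y ↔ R' i x y) → (f R x y ↔ f R' x y))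
    (G : Set V) (x y : A) (hxy : x ≠ y)
    (weaklyDecisive : ∀ R : V → A → A → Prop, (∀ i, IsStrictTotalOrder A (R i)) →
      (∀ i ∈ G, R i x y) → (∀ i ∉ G, R i y x) → f R x y) :
    ∀ a b : A, a ≠ b →
      ∀ R : V → A → A → Prop, (∀ i, IsStrictTotalOrder A (R i)) →
        (∀ i ∈ G, R i a b) → f R a b := by
  have hf : IsArrovian f := ⟨fun R hR => (hout R hR).toIsTrans, pareto, iia⟩
  have hA' : 3 ≤ ENat.card A := by rw [ENat.card_eq_coe_fintype_card]; exact_mod_cast hA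
  exact fun a b hab => WeaklyDecisiveOver.decisiveOver_of_ne hf hA' weaklyDecisive hxy hab

/-- Field Expansion Lemma: for a social welfare function satisfying Pareto Efficiency,
IIA and Universality over at least three alternatives, a coalition weakly decisive over
some ordered pair `(x, y)` with `x ≠ y` is decisive over every ordered pair. -/
theorem field_expansion_lemma
    {V A : Type} [Fintype V] [Fintype A] (hA : 3 ≤ Fintype.card A)
    (f : (V → A → A → Prop) → (A → A → Prop))
    (hout : ∀ R : V → A → A → Prop,
      (∀ i, IsStrictTotalOrder A (R i)) → IsStrictTotalOrder A (f R))
    (pareto : ∀ R : V → A → A → Prop, (∀ i, IsStrictTotalOrder A (R i)) →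
      ∀ x y : A, (∀ i, R i x y) → f R x y)
    (iia : ∀ R R' : V → A → A → Prop,
      (∀ i, IsStrictTotalOrder A (R i)) → (∀ i, IsStrictTotalOrder A (R' i)) →
      ∀ x y : A, (∀ i, R i x y ↔ R' i x y) → (f R x y ↔ f R' x y))
    (G : Set V) (x y : A) (hxy : x ≠ y)
    (weaklyDecisive : ∀ R : V → A → A → Prop, (∀ i, IsStrictTotalOrder A (R i)) →
      (∀ i ∈ G, R i x y) → (∀ i ∉ G, R i y x) → f R x y) :
    ∀ a b : A, a ≠ b →
      ∀ R : V → A → A → Prop, (∀ i, IsStrictTotalOrder A (R i)) →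
        (∀ i ∈ G, R i a b) → f R a b :=
  field_expansion_lemma_general hA f hout pareto iia G x y hxy weaklyDecisive
end

section
/- The winning-rate aggregation rule for ordinal benchmarks violates Independence of Irrelevant Alternatives: there exist a set of 9 tasks, a list of 3 models L, and an extended list L' of 4 models containing L, such that the relative rankings of the 3 original models within each task are identical in both configurations, yet the aggregate winning-rate ranking of the 3 models differs between L and L'. Concretely: with tasks T_1..T_9 where for T_1..T_4 the order is L1<L2<L3, for T_5..T_7 it is L2<L3<L1, and for T_8,T_9 it is L3<L1<L2, models L1 and L2 are tied in aggregate winning rate; after inserting a fourth model L4 so that for T_1..T_4 the order is L1<L2<L4<L3, for T_5..T_7 it is L2<L4<L3<L1, and for T_8,T_9 it is L3<L1<L2<L4, model L2 strictly beats L1 in aggregate winning rate, while all pairwise task-level comparisons among L1, L2, L3 are unchanged. -/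
/-- Aggregate winning rate of model `i`: `w̄_i = (1/m) Σ_j (1/n) Σ_k 1[r i k < r j k]`,
where `r i k` is the rank of model `i` in task `k` (smaller = better). -/
def wbar (m n : ℕ) (r : Fin m → Fin n → ℕ) (i : Fin m) : ℚ :=
  (1 / (m : ℚ)) * ∑ j : Fin m, (1 / (n : ℚ)) * ∑ k : Fin n,
    (if r i k < r j k then (1 : ℚ) else 0)

/-- The winning-rate aggregation violates IIA: there are 9 tasks, a list of 3 models with
task rankings `r`, and an extension `r'` with a fourth model, such that all pairwise
task-level comparisons among the original 3 models are unchanged, the original 3 models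
follow the stated orders in each task, yet L1 and L2 are tied in aggregate winning rate
before while L2 strictly beats L1 after. -/
theorem winning_rate_violates_IIA :
    ∃ (r : Fin 3 → Fin 9 → ℕ) (r' : Fin 4 → Fin 9 → ℕ),
      (∀ k : Fin 9, Function.Injective (fun i => r i k)) ∧
      (∀ k : Fin 9, Function.Injective (fun i => r' i k)) ∧
      -- original profile: T1..T4: L1<L2<L3; T5..T7: L2<L3<L1; T8,T9: L3<L1<L2
      (∀ k : Fin 9, k.val < 4 → r 0 k < r 1 k ∧ r 1 k < r 2 k) ∧
      (∀ k : Fin 9, 4 ≤ k.val → k.val < 7 → r 1 k < r 2 k ∧ r 2 k < r 0 k) ∧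
      (∀ k : Fin 9, 7 ≤ k.val → r 2 k < r 0 k ∧ r 0 k < r 1 k) ∧
      -- extended profile: T1..T4: L1<L2<L4<L3; T5..T7: L2<L4<L3<L1; T8,T9: L3<L1<L2<L4
      (∀ k : Fin 9, k.val < 4 → r' 0 k < r' 1 k ∧ r' 1 k < r' 3 k ∧ r' 3 k < r' 2 k) ∧
      (∀ k : Fin 9, 4 ≤ k.val → k.val < 7 →
        r' 1 k < r' 3 k ∧ r' 3 k < r' 2 k ∧ r' 2 k < r' 0 k) ∧
      (∀ k : Fin 9, 7 ≤ k.val → r' 2 k < r' 0 k ∧ r' 0 k < r' 1 k ∧ r' 1 k < r' 3 k) ∧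
      -- task-level pairwise comparisons among the original 3 models are unchanged
      (∀ i j : Fin 3, ∀ k : Fin 9,
        (r i k < r j k ↔ r' i.castSucc k < r' j.castSucc k)) ∧
      -- before: L1 and L2 tied in aggregate winning rate
      wbar 3 9 r 0 = wbar 3 9 r 1 ∧
      -- after: L2 strictly beats L1 in aggregate winning rate
      wbar 4 9 r' 0 < wbar 4 9 r' 1 := by
  refine ⟨fun i k => if k.val < 4 then [0,1,3].get i
      else if k.val < 7 then [3,0,2].get i else [1,2,0].get i,
    fun i k => if k.val < 4 then [0,1,3,2].get i
      else if k.val < 7 then [3,0,2,1].get i else [1,2,0,3].get i,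
    by decide, by decide, by decide, by decide, by decide, by decide, by decide,
    by decide, by decide, ?_, ?_⟩ <;>
  · simp only [wbar, Fin.sum_univ_succ, Fin.sum_univ_zero]
    norm_num
end

section
/- If the relaxed cardinal objective ℓ^c = Σ_{i,j} 1[r_i < r_j] · max(s̄'_i − s̄'_j, −λ) with λ ≥ 0 attains the value −λ·(number of pairs with r_i < r_j) (its minimum), then for every pair with r_i < r_j we have s̄'_i < s̄'_j (assuming λ > 0), and hence the ranking induced by the scores s̄' is exactly the reverse of r, so the normalized Kendall tau distance between r and the new ranking equals 1. -/
/-- Number of discordant (unordered) pairs between two strict rankings. -/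
def discordantPairs (m : ℕ) (r r' : Equiv.Perm (Fin m)) : ℕ :=
  (Finset.univ.filter (fun p : Fin m × Fin m =>
    p.1 < p.2 ∧ ¬((r p.1 < r p.2) ↔ (r' p.1 < r' p.2)))).card

/-- Normalized Kendall tau distance `τ = (#discordant pairs)/C(m,2)`. -/
def kendallTau (m : ℕ) (r r' : Equiv.Perm (Fin m)) : ℚ :=
  (discordantPairs m r r' : ℚ) / (m.choose 2 : ℚ)

/-- The set of ordered pairs `(i,j)` with `r i < r j` (model `i` originally better). -/
def betterPairs (m : ℕ) (r : Equiv.Perm (Fin m)) : Finset (Fin m × Fin m) :=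
  Finset.univ.filter fun p : Fin m × Fin m => r p.1 < r p.2

theorem card_ltPairs (m : ℕ) :
    (Finset.univ.filter (fun p : Fin m × Fin m => p.1 < p.2)).card = m.choose 2 := by
  rw [Finset.card_filter, Fintype.sum_prod_type_right]
  have h : ∀ j : Fin m, (∑ i : Fin m, if i < j then 1 else 0) = (j : ℕ) := by
    intro j
    rw [← Finset.card_filter]
    have : Finset.univ.filter (fun i : Fin m => i < j) = Finset.Iio j := by
      ext i; simp
    rw [this, Fin.card_Iio]
  simp only [h]
  rw [Fin.sum_univ_eq_sum_range (fun j => j), Finset.sum_range_id, Nat.choose_two_right]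

/-- If the relaxed cardinal objective `ℓ^c = Σ_{r_i < r_j} max(s̄'_i − s̄'_j, −λ)`
attains its minimum `−λ · #{(i,j) : r_i < r_j}` with `λ > 0`, then every pair with
`r_i < r_j` satisfies `s̄'_i < s̄'_j`, and any ranking by decreasing modified score is
the exact reverse of `r`, so the normalized Kendall tau distance equals `1`. -/
theorem relaxed_objective_min_gives_full_reversal
    (m : ℕ) (hm : 2 ≤ m) (r : Equiv.Perm (Fin m)) (s' : Fin m → ℝ)
    (lam : ℝ) (hlam : 0 < lam)
    (hmin : ∑ p ∈ betterPairs m r, max (s' p.1 - s' p.2) (-lam) =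
      -lam * (betterPairs m r).card) :
    (∀ i j : Fin m, r i < r j → s' i < s' j) ∧
    ∀ r' : Equiv.Perm (Fin m),
      (∀ i j : Fin m, s' j < s' i ↔ r' i < r' j) →
      kendallTau m r r' = 1 := by
  -- each term equals -lam
  have hterm : ∀ p ∈ betterPairs m r, max (s' p.1 - s' p.2) (-lam) = -lam := by
    have hzero : ∑ p ∈ betterPairs m r, (max (s' p.1 - s' p.2) (-lam) - (-lam)) = 0 := by
      rw [Finset.sum_sub_distrib, hmin, Finset.sum_const, nsmul_eq_mul]
      ring
    have := (Finset.sum_eq_zero_iff_of_nonneg (fun p _ => by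
      have := le_max_right (s' p.1 - s' p.2) (-lam); linarith)).mp hzero
    intro p hp
    have := this p hp
    linarith [this]
  have hlt : ∀ i j : Fin m, r i < r j → s' i < s' j := by
    intro i j hij
    have hp : (i, j) ∈ betterPairs m r := by simp [betterPairs, hij]
    have := hterm (i, j) hp
    have : s' i - s' j ≤ -lam := by
      by_contra hc
      push_neg at hc
      rw [max_eq_left hc.le] at this
      linarith
    linarith
  refine ⟨hlt, fun r' hr' => ?_⟩
  have hdisc : discordantPairs m r r' =
      (Finset.univ.filter (fun p : Fin m × Fin m => p.1 < p.2)).card := by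
    unfold discordantPairs
    congr 1
    apply Finset.filter_congr
    intro p _
    simp only [and_iff_left_iff_imp]
    intro hp
    -- p.1 ≠ p.2, so r p.1 < r p.2 or r p.2 < r p.1
    have hne : r p.1 ≠ r p.2 := fun h => absurd (r.injective h) hp.ne
    rcases hne.lt_or_gt with h | h
    · have := hlt _ _ h
      have h2 : r' p.2 < r' p.1 := (hr' _ _).mp this
      intro hiff
      exact absurd (hiff.mp h) (not_lt.mpr h2.le)
    · have := hlt _ _ h
      have h2 : r' p.1 < r' p.2 := (hr' _ _).mp this
      intro hiff
      exact absurd (hiff.mpr h2) (not_lt.mpr h.le)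
  have hc : (m.choose 2 : ℚ) ≠ 0 := by
    have : 0 < m.choose 2 := Nat.choose_pos hm
    exact_mod_cast this.ne'
  rw [kendallTau, hdisc, card_ltPairs, div_self hc]
end
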